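/- arXiv:2009.10544 — 2 statements merged into one kernel-verified Lean document; each statement's English description precedes it below -/
import Mathlib

section
/- Each Farey sequence F_n is strictly increasing (in particular every rational appears at most once in any F_n), and the union over all n of the sets of terms of F_n equals ℚ ∩ [0,1]. -/
open scoped MatrixGroups OnePoint
open Matrix MeasureTheory Filter Topology

noncomputable section

namespace Farey

/-- Möbius action of a real 2×2 matrix on `ℝ ∪ {∞}`. -/
def mobAux (M : Matrix (Fin 2) (Fin 2) ℝ) : OnePoint ℝ → OnePoint ℝ :=
  OnePoint.rec (if M 1 0 = 0 then ∞ else ((M 0 0 / M 1 0 : ℝ) : OnePoint ℝ))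
    (fun r => if M 1 0 * r + M 1 1 = 0 then ∞
      else (((M 0 0 * r + M 0 1) / (M 1 0 * r + M 1 1) : ℝ) : OnePoint ℝ))

@[simp] lemma mobAux_infty (M : Matrix (Fin 2) (Fin 2) ℝ) :
    mobAux M ∞ = if M 1 0 = 0 then ∞ else ((M 0 0 / M 1 0 : ℝ) : OnePoint ℝ) := rfl

@[simp] lemma mobAux_coe (M : Matrix (Fin 2) (Fin 2) ℝ) (r : ℝ) :
    mobAux M (r : OnePoint ℝ) = if M 1 0 * r + M 1 1 = 0 then ∞
      else (((M 0 0 * r + M 0 1) / (M 1 0 * r + M 1 1) : ℝ) : OnePoint ℝ) := rfl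

lemma mobAux_neg (M : Matrix (Fin 2) (Fin 2) ℝ) : mobAux (-M) = mobAux M := by
  funext x
  induction x using OnePoint.rec with
  | infty => simp [Matrix.neg_apply, neg_eq_zero, neg_div_neg_eq]
  | coe r =>
      rw [mobAux_coe, mobAux_coe]
      have h1 : (-M) 1 0 * r + (-M) 1 1 = -(M 1 0 * r + M 1 1) := by
        simp [Matrix.neg_apply]; ring
      have h0 : (-M) 0 0 * r + (-M) 0 1 = -(M 0 0 * r + M 0 1) := by
        simp [Matrix.neg_apply]; ring
      rw [h1, h0]
      simp only [neg_eq_zero, neg_div_neg_eq]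

end Farey

namespace Farey

/-- Möbius action of an integral 2×2 special linear matrix on `ℝ ∪ {∞}`. -/
def mobSL (g : SL(2, ℤ)) : OnePoint ℝ → OnePoint ℝ :=
  mobAux ((g : Matrix (Fin 2) (Fin 2) ℤ).map (Int.cast : ℤ → ℝ))

lemma mobSL_mul_center (g z : SL(2, ℤ)) (hz : z ∈ Subgroup.center SL(2, ℤ)) :
    mobSL (g * z) = mobSL g := by
  obtain ⟨r, hr, hscalar⟩ := Matrix.SpecialLinearGroup.mem_center_iff.mp hz
  have hr' : r = 1 ∨ r = -1 := by
    have : IsUnit r := IsUnit.of_mul_eq_one (r ^ 1) (by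
      simpa [pow_succ, Fintype.card_fin] using hr)
    exact Int.isUnit_iff.mp this
  rcases hr' with h1 | h1
  · have : z = 1 := by
      ext i j
      have := congrFun (congrFun hscalar i) j
      simp [h1] at this
      simp [← this]
    simp [this]
  · have hzmat : (z : Matrix (Fin 2) (Fin 2) ℤ) = -1 := by
      ext i j
      have := congrFun (congrFun hscalar i) j
      simp [h1] at this
      simp [← this]
    unfold mobSL
    have : ((g * z : SL(2,ℤ)) : Matrix (Fin 2) (Fin 2) ℤ) = -(g : Matrix (Fin 2) (Fin 2) ℤ) := by
      rw [Matrix.SpecialLinearGroup.coe_mul, hzmat]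
      simp
    rw [this]
    have hmap : ((-(g : Matrix (Fin 2) (Fin 2) ℤ)).map (Int.cast : ℤ → ℝ))
        = -(((g : Matrix (Fin 2) (Fin 2) ℤ)).map (Int.cast : ℤ → ℝ)) := by
      ext i j
      simp
    rw [hmap, mobAux_neg]

/-- Möbius action of an element of `PSL(2,ℤ)` on `ℝ ∪ {∞}`. -/
def mob (x : PSL(2, ℤ)) : OnePoint ℝ → OnePoint ℝ :=
  Quotient.liftOn' x mobSL (by
    intro g h hgh
    have hmem : g⁻¹ * h ∈ Subgroup.center SL(2, ℤ) := QuotientGroup.leftRel_apply.mp hgh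
    have : h = g * (g⁻¹ * h) := by group
    rw [this, mobSL_mul_center g _ hmem])

end Farey

namespace Farey

/-- The matrix `A = [[1,-2],[1,-1]]` as an element of `SL(2,ℤ)`. -/
def A : SL(2, ℤ) := ⟨!![1, -2; 1, -1], by norm_num [Matrix.det_fin_two_of]⟩

/-- The matrix `B = [[0,-1],[1,0]]` as an element of `SL(2,ℤ)`. -/
def B : SL(2, ℤ) := ⟨!![0, -1; 1, 0], by norm_num [Matrix.det_fin_two_of]⟩

/-- The matrix `C = [[1,-1],[2,-1]]` as an element of `SL(2,ℤ)`. -/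
def C : SL(2, ℤ) := ⟨!![1, -1; 2, -1], by norm_num [Matrix.det_fin_two_of]⟩

/-- The element `a ∈ PSL(2,ℤ)`. -/
def a : PSL(2, ℤ) := QuotientGroup.mk A

/-- The element `b ∈ PSL(2,ℤ)`. -/
def b : PSL(2, ℤ) := QuotientGroup.mk B

/-- The element `c ∈ PSL(2,ℤ)`. -/
def c : PSL(2, ℤ) := QuotientGroup.mk C

/-- The Farey group: the subgroup of `PSL(2,ℤ)` generated by `a`, `b`, `c`. -/
def fareyGroup : Subgroup PSL(2, ℤ) := Subgroup.closure {a, b, c}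

/-- The word length of an element of `PSL(2,ℤ)` with respect to the generators
`a`, `b`, `c` of the Farey group. -/
def wordLength (x : PSL(2, ℤ)) : ℕ :=
  sInf {n | ∃ l : List PSL(2, ℤ), l.length = n ∧ (∀ s ∈ l, s = a ∨ s = b ∨ s = c) ∧ l.prod = x}

/-- The sphere of radius `n` in the Farey group for the word metric w.r.t. `{a,b,c}`. -/
def sphere (n : ℕ) : Set PSL(2, ℤ) := {x | x ∈ fareyGroup ∧ wordLength x = n}

end Farey

namespace Farey

/-- The mediant of two rationals, `p₁/q₁ ⊕ p₂/q₂ = (p₁+p₂)/(q₁+q₂)` (in lowest terms). -/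
def mediant (p q : ℚ) : ℚ := ((p.num + q.num : ℤ) : ℚ) / (((p.den : ℤ) + (q.den : ℤ) : ℤ) : ℚ)

/-- Insert the mediant between every two consecutive entries of a list of rationals. -/
def insertMediants : List ℚ → List ℚ
  | p :: q :: rest => p :: mediant p q :: insertMediants (q :: rest)
  | l => l

/-- The Farey sequences: `F_0 = (0,1)`, and `F_{n+1}` is obtained from `F_n` by inserting
mediants between consecutive terms. -/
def fareySeq : ℕ → List ℚ
  | 0 => [0, 1]
  | n + 1 => insertMediants (fareySeq n)

/-- `p, q` are consecutive terms of the Farey sequence `F_n`. -/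
def IsFareyPairIn (n : ℕ) (p q : ℚ) : Prop :=
  ∃ i : ℕ, (fareySeq n)[i]? = some p ∧ (fareySeq n)[i + 1]? = some q

/-- `p, q` form a Farey pair: they are consecutive terms of some Farey sequence. -/
def IsFareyPair (p q : ℚ) : Prop := ∃ n : ℕ, IsFareyPairIn n p q

/-- The `k`-th summand (`k = 0, 1, 2, …`) in the series defining Minkowski's question mark
function: `(−1)^k 2^{−(a₁+⋯+a_{k+1})}` when the continued fraction expansion
`x = [a₀; a₁, a₂, …]` has at least `k+1` partial denominators and `0` otherwise. -/
def qmTerm (x : ℝ) (k : ℕ) : ℝ :=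
  match (List.range (k + 1)).mapM (fun i => (GenContFract.of x).partDens.get? i) with
  | none => 0
  | some l => (-1 : ℝ) ^ k * (2 : ℝ) ^ (-(l.sum))

/-- Minkowski's question mark function on `[0,1]`:
`?(x) = 2 ∑_{k≥1} (−1)^{k+1} 2^{−(a₁+⋯+a_k)}` for `x = [0; a₁, a₂, …]`, `?(1) = 1`. -/
def questionMark (x : ℝ) : ℝ := if x = 1 then 1 else 2 * ∑' k : ℕ, qmTerm x k

/-- The extended Minkowski function `M̄(q) = (1/3)(∑_{k=−∞}^{m−1} 2^{−|k|} + ?(q−m)·2^{−|m|})`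
for `q ∈ [m, m+1]`. -/
def extM (q : ℝ) : ℝ :=
  (1 / 3) * ((∑' j : ℕ, (2 : ℝ) ^ (-|⌊q⌋ - 1 - (j : ℤ)|)) +
    questionMark (q - ⌊q⌋) * (2 : ℝ) ^ (-|⌊q⌋|))

instance : MeasurableSpace (OnePoint ℝ) := borel _
instance : BorelSpace (OnePoint ℝ) := ⟨rfl⟩

/-- `μ` is the extended Minkowski measure: the Borel probability measure on `ℝ ∪ {∞}` giving
no mass to `{∞}` whose cumulative distribution function is the extended Minkowski function. -/
def IsExtMinkowskiMeasure (μ : Measure (OnePoint ℝ)) : Prop :=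
  IsProbabilityMeasure μ ∧ μ {∞} = 0 ∧
    ∀ u v : ℝ, u ≤ v →
      μ ((fun r : ℝ => (r : OnePoint ℝ)) '' Set.Ico u v) = ENNReal.ofReal (extM v - extM u)

end Farey

open Farey

/-!
Consecutive terms `p < q` of `F_n` are unimodular, `q.num * p.den - p.num * q.den = 1`. The
mediant of a unimodular pair is then already in lowest terms and unimodular with both ends, so
the invariant passes to `F_{n+1}`, and it forces `p < q`. Inductively, consecutive terms of
`F_n` also have denominators summing to at least `n + 2`. A rational `x` strictly between a
unimodular pair `p < q` has `x.den ≥ p.den + q.den`, so `x ∈ [0,1]` cannot fall strictly between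
two consecutive terms of `F_{x.den}`, which starts at `0` and ends at `1`: it is one of them.
-/

namespace List

variable {α : Type*}

theorem Pairwise.mem_Icc_of_head?_of_getLast? [Preorder α] {l : List α} {a b x : α}
    (hl : l.Pairwise (· ≤ ·)) (ha : l.head? = some a) (hb : l.getLast? = some b) (hx : x ∈ l) :
    x ∈ Set.Icc a b := by
  constructor
  · obtain ⟨t, rfl⟩ := head?_eq_some_iff.mp ha
    rcases mem_cons.mp hx with rfl | hx
    · exact le_rfl
    · exact rel_of_pairwise_cons hl hx
  · obtain ⟨s, rfl⟩ := getLast?_eq_some_iff.mp hb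
    rcases mem_append.mp hx with hx | hx
    · exact (pairwise_append.mp hl).2.2 x hx b (mem_singleton_self b)
    · exact (mem_singleton.mp hx).le

theorem IsChain.mem_or_exists_lt_lt [LinearOrder α] {R : α → α → Prop} {l : List α} {a b x : α}
    (hl : l.IsChain R) (ha : l.head? = some a) (hb : l.getLast? = some b) (hax : a ≤ x)
    (hxb : x ≤ b) : x ∈ l ∨ ∃ p q, R p q ∧ p < x ∧ x < q := by
  induction l generalizing a with
  | nil => cases ha
  | cons c l ih =>
    obtain rfl : c = a := Option.some.inj ha
    rcases eq_or_lt_of_le hax with rfl | hcx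
    · exact Or.inl mem_cons_self
    cases l with
    | nil =>
      obtain rfl : c = b := Option.some.inj hb
      exact absurd hxb (not_le.mpr hcx)
    | cons d l =>
      obtain ⟨hcd, hl⟩ := isChain_cons_cons.mp hl
      rcases lt_or_ge x d with hxd | hdx
      · exact Or.inr ⟨c, d, hcd, hcx, hxd⟩
      · rcases ih hl rfl (by simpa using hb) hdx with hmem | hstep
        · exact Or.inl (mem_cons_of_mem c hmem)
        · exact Or.inr hstep

end List

namespace Farey

def Unimodular (p q : ℚ) : Prop := q.num * p.den - p.num * q.den = 1

namespace Unimodular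

variable {p q x : ℚ}

theorem lt (h : Unimodular p q) : p < q := by
  rw [Rat.lt_iff]
  unfold Unimodular at h
  omega

theorem mediant_num_den (h : Unimodular p q) :
    (mediant p q).num = p.num + q.num ∧ (mediant p q).den = p.den + q.den := by
  have hden : (0 : ℤ) < p.den + q.den := by positivity
  have hcop : IsCoprime (p.num + q.num) (p.den + q.den) :=
    ⟨-q.den, q.num, by unfold Unimodular at h; linear_combination h⟩
  rw [Int.isCoprime_iff_gcd_eq_one, Int.gcd] at hcop
  have hmden : ((mediant p q).den : ℤ) = p.den + q.den := Rat.den_div_eq_of_coprime hden hcop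
  exact ⟨Rat.num_div_eq_of_coprime hden hcop, by exact_mod_cast hmden⟩

theorem left_mediant (h : Unimodular p q) : Unimodular p (mediant p q) := by
  obtain ⟨hnum, hden⟩ := h.mediant_num_den
  unfold Unimodular at h ⊢
  rw [hnum, hden]
  push_cast
  linear_combination h

theorem mediant_right (h : Unimodular p q) : Unimodular (mediant p q) q := by
  obtain ⟨hnum, hden⟩ := h.mediant_num_den
  unfold Unimodular at h ⊢
  rw [hnum, hden]
  push_cast
  linear_combination h

theorem den_add_den_le (h : Unimodular p q) (hpx : p < x) (hxq : x < q) :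
    p.den + q.den ≤ x.den := by
  have hleft : 1 ≤ x.num * p.den - p.num * x.den := by
    have := (Rat.lt_iff p x).mp hpx; omega
  have hright : 1 ≤ q.num * x.den - x.num * q.den := by
    have := (Rat.lt_iff x q).mp hxq; omega
  have hx : (x.den : ℤ) = p.den * (q.num * x.den - x.num * q.den)
      + q.den * (x.num * p.den - p.num * x.den) := by
    unfold Unimodular at h
    linear_combination -(x.den : ℤ) * h
  have : (p.den + q.den : ℤ) ≤ x.den := by
    rw [hx]
    nlinarith [p.den_pos, q.den_pos]
  exact_mod_cast this

end Unimodular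

theorem head?_insertMediants : ∀ l : List ℚ, (insertMediants l).head? = l.head?
  | [] | [_] | _ :: _ :: _ => rfl

theorem getLast?_insertMediants : ∀ l : List ℚ, (insertMediants l).getLast? = l.getLast?
  | [] | [_] => rfl
  | p :: q :: rest => by
    have ih := getLast?_insertMediants (q :: rest)
    simp_all [insertMediants, List.getLast?_cons]

theorem isChain_insertMediants {R S : ℚ → ℚ → Prop}
    (hRS : ∀ p q, R p q → S p (mediant p q) ∧ S (mediant p q) q) :
    ∀ {l : List ℚ}, l.IsChain R → (insertMediants l).IsChain S
  | [], _ | [_], _ => by simp [insertMediants]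
  | p :: q :: rest, hl => by
    obtain ⟨hpq, hl⟩ := List.isChain_cons_cons.mp hl
    obtain ⟨hpm, hmq⟩ := hRS p q hpq
    have hm : ∀ y ∈ (insertMediants (q :: rest)).head?, S (mediant p q) y := by
      simpa [head?_insertMediants] using hmq
    exact List.isChain_cons_cons.mpr
      ⟨hpm, List.isChain_cons.mpr ⟨hm, isChain_insertMediants hRS hl⟩⟩

theorem head?_fareySeq : ∀ n, (fareySeq n).head? = some 0
  | 0 => rfl
  | n + 1 => (head?_insertMediants _).trans (head?_fareySeq n)

theorem getLast?_fareySeq : ∀ n, (fareySeq n).getLast? = some 1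
  | 0 => rfl
  | n + 1 => (getLast?_insertMediants _).trans (getLast?_fareySeq n)

theorem isChain_fareySeq :
    ∀ n, (fareySeq n).IsChain (fun p q => Unimodular p q ∧ n + 2 ≤ p.den + q.den)
  | 0 => by simp [fareySeq, Unimodular]
  | n + 1 => isChain_insertMediants (fun p q ⟨h, hn⟩ => by
      have hden := h.mediant_num_den.2
      have := p.den_pos
      have := q.den_pos
      exact ⟨⟨h.left_mediant, by omega⟩, ⟨h.mediant_right, by omega⟩⟩) (isChain_fareySeq n)

theorem pairwise_lt_fareySeq (n : ℕ) : (fareySeq n).Pairwise (· < ·) :=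
  List.isChain_iff_pairwise.mp ((isChain_fareySeq n).imp fun _ _ h => h.1.lt)

theorem mem_Icc_of_mem_fareySeq {n : ℕ} {x : ℚ} (hx : x ∈ fareySeq n) : x ∈ Set.Icc 0 1 :=
  ((pairwise_lt_fareySeq n).imp le_of_lt).mem_Icc_of_head?_of_getLast?
    (head?_fareySeq n) (getLast?_fareySeq n) hx

theorem mem_fareySeq_den {x : ℚ} (hx : x ∈ Set.Icc 0 1) : x ∈ fareySeq x.den := by
  rcases (isChain_fareySeq x.den).mem_or_exists_lt_lt (head?_fareySeq _) (getLast?_fareySeq _)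
    hx.1 hx.2 with hmem | ⟨p, q, ⟨h, hden⟩, hpx, hxq⟩
  · exact hmem
  · have := h.den_add_den_le hpx hxq
    omega

end Farey

/-- **Lemma (Farey sequences).** Each Farey sequence `F_n` is strictly increasing (in
particular each rational appears at most once in any `F_n`), and the union over all `n` of
the sets of terms of the `F_n` equals `ℚ ∩ [0,1]`. -/
theorem fareySeq_sorted_and_union :
    (∀ n : ℕ, (fareySeq n).Pairwise (· < ·)) ∧
    (∀ n : ℕ, (fareySeq n).Nodup) ∧
    (∀ q : ℚ, (∃ n : ℕ, q ∈ fareySeq n) ↔ 0 ≤ q ∧ q ≤ 1) :=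
  ⟨pairwise_lt_fareySeq, fun n => (pairwise_lt_fareySeq n).nodup,
    fun _ => ⟨fun ⟨_, hx⟩ => mem_Icc_of_mem_fareySeq hx, fun hx => ⟨_, mem_fareySeq_den hx⟩⟩⟩
end
end

section
/- The Farey group Γ is isomorphic to the free product ℤ/2ℤ * ℤ/2ℤ * ℤ/2ℤ: the canonical group homomorphism from (ℤ/2ℤ) * (ℤ/2ℤ) * (ℤ/2ℤ) to PSL(2,ℤ) sending the three generators of the free factors to a, b, c respectively is injective, and its image is Γ. -/
open scoped MatrixGroups OnePoint
open Matrix MeasureTheory Filter Topology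

noncomputable section

/-!
Acting on the upper half-plane, `a`, `b` and `c` are the half-turns about `1 + i`, `i` and
`(1 + i)/2`, points of the geodesics `Re z = 1`, `Re z = 0` and the semicircle over `[0, 1]`.
A half-turn swaps the two sides of a geodesic through its centre. The regions `Re z > 1`,
`Re z < 0` and the half-disc over `(0, 1)` each lie on the far side of the other two geodesics,
so each generator maps the other two regions into its own, and the ping-pong lemma for free
products makes the canonical map injective. Its image is generated by `a`, `b`, `c`.
-/

open scoped Pointwise

namespace Monoid.CoprodI

variable {ι G : Type*} [Group G] (φ : CoprodI (fun _ : ι => Multiplicative (ZMod 2)) →* G)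

theorem injective_of_ping_pong_zmod_two {α : Type*} [MulAction G α] (hι : 3 ≤ Cardinal.mk ι)
    (X : ι → Set α) (hX : ∀ i, (X i).Nonempty) (hdisj : Pairwise (Function.onFun Disjoint X))
    (hpp : Pairwise fun i j => φ (of (i := i) (Multiplicative.ofAdd 1)) • X j ⊆ X i) :
    Function.Injective φ := by
  have : Nontrivial ι :=
    Cardinal.one_lt_iff_nontrivial.1 ((by norm_num : (1 : Cardinal) < 3).trans_le hι)
  rw [← lift_comp_of' φ]
  refine lift_injective_of_ping_pong _ (.inl hι) X hX hdisj fun i j hij h hh => ?_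
  obtain rfl : h = Multiplicative.ofAdd 1 := by revert h hh; decide
  exact hpp hij

theorem range_eq_closure_zmod_two :
    φ.range = Subgroup.closure (Set.range fun i => φ (of (i := i) (Multiplicative.ofAdd 1))) := by
  refine le_antisymm ?_ (Subgroup.closure_le _ |>.2 <| Set.range_subset_iff.2 fun i => ⟨_, rfl⟩)
  rw [← lift_comp_of' φ]
  refine lift_range_le (G := fun _ => Multiplicative (ZMod 2)) _ fun i => ?_
  rintro _ ⟨h, rfl⟩
  obtain rfl | rfl : h = 1 ∨ h = Multiplicative.ofAdd 1 := by revert h; decide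
  · simp
  · exact Subgroup.subset_closure ⟨i, rfl⟩

end Monoid.CoprodI

open UpperHalfPlane Complex

namespace Matrix.ProjectiveSpecialLinearGroup

def toPGLReal : PSL(2, ℤ) →* PGL(2, ℝ) :=
  (ProjGenLinGroup.map (Int.castRingHom ℝ)).comp toPGL

instance : MulAction PSL(2, ℤ) ℍ := MulAction.compHom ℍ toPGLReal

theorem mk_smul_upperHalfPlane (g : SL(2, ℤ)) (z : ℍ) :
    (QuotientGroup.mk g : PSL(2, ℤ)) • z = g • z :=
  rfl

end Matrix.ProjectiveSpecialLinearGroup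

open Matrix.ProjectiveSpecialLinearGroup

theorem UpperHalfPlane.coe_sub_ne_zero (z : ℍ) {w : ℂ} (hw : w.im = 0) : (z : ℂ) - w ≠ 0 :=
  fun h => z.im_ne_zero (by simpa [hw, sub_eq_zero] using congr_arg Complex.im h)

namespace Farey

theorem coe_a_smul (z : ℍ) : ((a • z : ℍ) : ℂ) = 1 - ((z : ℂ) - 1)⁻¹ := by
  have hz := z.coe_sub_ne_zero (w := 1) (by simp)
  have hmoeb : ((a • z : ℍ) : ℂ) = (z - 2) / (z - 1) := by
    rw [a, mk_smul_upperHalfPlane, coe_specialLinearGroup_apply]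
    simp [A, ← sub_eq_add_neg]
  rw [hmoeb, div_eq_iff hz]
  linear_combination inv_mul_cancel₀ hz

theorem coe_b_smul (z : ℍ) : ((b • z : ℍ) : ℂ) = -(z : ℂ)⁻¹ := by
  rw [b, mk_smul_upperHalfPlane, coe_specialLinearGroup_apply]
  simp [B, neg_div]

theorem coe_c_smul (z : ℍ) :
    ((c • z : ℍ) : ℂ) = 1 / 2 - (4 * ((z : ℂ) - 1 / 2))⁻¹ := by
  have hz : 2 * (z : ℂ) - 1 ≠ 0 := by
    simpa [mul_sub] using mul_ne_zero two_ne_zero (z.coe_sub_ne_zero (w := 1 / 2) (by simp))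
  have hmoeb : ((c • z : ℍ) : ℂ) = (z - 1) / (2 * z - 1) := by
    rw [c, mk_smul_upperHalfPlane, coe_specialLinearGroup_apply]
    simp [C, ← sub_eq_add_neg]
  rw [hmoeb, show 4 * ((z : ℂ) - 1 / 2) = 2 * (2 * z - 1) by ring, mul_inv,
    div_eq_iff hz]
  linear_combination (1 / 2 : ℂ) * inv_mul_cancel₀ hz

def rightOfOne : Set ℍ := {z | 1 < z.re}

def leftOfZero : Set ℍ := {z | z.re < 0}

def halfDisc : Set ℍ := {z | ‖(z : ℂ) - 1 / 2‖ < 1 / 2}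

def pingPongSet : Fin 3 → Set ℍ := ![rightOfOne, leftOfZero, halfDisc]

theorem abs_re_sub_half_le (z : ℍ) : |z.re - 1 / 2| ≤ ‖(z : ℂ) - 1 / 2‖ := by
  simpa using abs_re_le_norm ((z : ℂ) - 1 / 2)

theorem re_mem_Ioo_of_mem_halfDisc {z : ℍ} (hz : z ∈ halfDisc) : 0 < z.re ∧ z.re < 1 := by
  have := abs_lt.1 ((abs_re_sub_half_le z).trans_lt hz)
  constructor <;> linarith

theorem half_lt_norm_sub_half {z : ℍ} (hz : z.re < 0 ∨ 1 < z.re) :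
    1 / 2 < ‖(z : ℂ) - 1 / 2‖ :=
  (lt_abs.2 <| hz.symm.imp (by intro; linarith) (by intro; linarith)).trans_le
    (abs_re_sub_half_le z)

theorem a_smul_mem_rightOfOne {z : ℍ} (hz : z.re < 1) : a • z ∈ rightOfOne := by
  have hpos : 0 < normSq ((z : ℂ) - 1) := normSq_pos.2 (z.coe_sub_ne_zero (by simp))
  have hneg : ((z : ℂ) - 1).re < 0 := by simpa using hz
  change 1 < ((a • z : ℍ) : ℂ).re
  rw [coe_a_smul, sub_re, one_re, inv_re]
  linarith [div_neg_of_neg_of_pos hneg hpos]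

theorem b_smul_mem_leftOfZero {z : ℍ} (hz : 0 < z.re) : b • z ∈ leftOfZero := by
  change ((b • z : ℍ) : ℂ).re < 0
  rw [coe_b_smul, neg_re, inv_re, neg_neg_iff_pos]
  exact div_pos hz (normSq_pos.2 z.ne_zero)

theorem c_smul_mem_halfDisc {z : ℍ} (hz : 1 / 2 < ‖(z : ℂ) - 1 / 2‖) :
    c • z ∈ halfDisc := by
  change ‖((c • z : ℍ) : ℂ) - 1 / 2‖ < 1 / 2
  have hpos : 0 < 4 * ‖(z : ℂ) - 1 / 2‖ := mul_pos four_pos (one_half_pos.trans hz)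
  rw [coe_c_smul, sub_sub_cancel_left, norm_neg, norm_inv, norm_mul, Complex.norm_ofNat,
    inv_lt_comm₀ hpos (by norm_num), inv_div, div_one]
  linarith

theorem pingPongSet_nonempty : ∀ i, (pingPongSet i).Nonempty
  | 0 => ⟨⟨2 + Complex.I, by simp⟩, show (1 : ℝ) < (2 + Complex.I).re by simp⟩
  | 1 => ⟨⟨-1 + Complex.I, by simp⟩, show (-1 + Complex.I).re < 0 by simp⟩
  | 2 => ⟨⟨1 / 2 + Complex.I / 4, by simp⟩,
      show ‖1 / 2 + Complex.I / 4 - 1 / 2‖ < (1 / 2 : ℝ) by norm_num⟩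

theorem pairwise_disjoint_pingPongSet : Pairwise (Function.onFun Disjoint pingPongSet) := by
  intro i j hij
  refine Set.disjoint_left.2 fun z hi hj => ?_
  match i, j, hi, hj with
  | 0, 1, (h : 1 < z.re), (h' : z.re < 0) | 1, 0, (h' : z.re < 0), (h : 1 < z.re) => linarith
  | 0, 2, (h : 1 < z.re), hd | 2, 0, hd, (h : 1 < z.re) =>
    linarith [(re_mem_Ioo_of_mem_halfDisc hd).2]
  | 1, 2, (h : z.re < 0), hd | 2, 1, hd, (h : z.re < 0) =>
    linarith [(re_mem_Ioo_of_mem_halfDisc hd).1]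
  | 0, 0, _, _ | 1, 1, _, _ | 2, 2, _, _ => exact hij rfl

theorem smul_pingPongSet_subset :
    Pairwise fun i j => ![a, b, c] i • pingPongSet j ⊆ pingPongSet i := by
  rintro i j hij _ ⟨z, hz, rfl⟩
  match i, j, hz with
  | 0, 1, (hz : z.re < 0) => exact a_smul_mem_rightOfOne (by linarith)
  | 0, 2, hz => exact a_smul_mem_rightOfOne (re_mem_Ioo_of_mem_halfDisc hz).2
  | 1, 0, (hz : 1 < z.re) => exact b_smul_mem_leftOfZero (by linarith)
  | 1, 2, hz => exact b_smul_mem_leftOfZero (re_mem_Ioo_of_mem_halfDisc hz).1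
  | 2, 0, hz => exact c_smul_mem_halfDisc (half_lt_norm_sub_half (.inr hz))
  | 2, 1, hz => exact c_smul_mem_halfDisc (half_lt_norm_sub_half (.inl hz))
  | 0, 0, _ | 1, 1, _ | 2, 2, _ => exact absurd rfl hij

end Farey

open Farey

/-- **Theorem (presentation of the Farey group).** The Farey group is isomorphic to the free
product `ℤ/2 * ℤ/2 * ℤ/2`: the canonical homomorphism from `(ℤ/2) * (ℤ/2) * (ℤ/2)` to
`PSL(2,ℤ)` sending the three generators of the free factors to `a`, `b`, `c` respectively is
injective, and its image is `Γ`. -/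
theorem farey_free_product
    (φ : Monoid.CoprodI (fun _ : Fin 3 => Multiplicative (ZMod 2)) →* PSL(2, ℤ))
    (ha : φ (Monoid.CoprodI.of (i := 0) (Multiplicative.ofAdd (1 : ZMod 2))) = a)
    (hb : φ (Monoid.CoprodI.of (i := 1) (Multiplicative.ofAdd (1 : ZMod 2))) = b)
    (hc : φ (Monoid.CoprodI.of (i := 2) (Multiplicative.ofAdd (1 : ZMod 2))) = c) :
    Function.Injective φ ∧ φ.range = fareyGroup := by
  have hgen : ∀ i, φ (Monoid.CoprodI.of (i := i) (Multiplicative.ofAdd 1)) = ![a, b, c] i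
    | 0 => ha
    | 1 => hb
    | 2 => hc
  constructor
  · refine Monoid.CoprodI.injective_of_ping_pong_zmod_two φ (by simp) pingPongSet
      pingPongSet_nonempty pairwise_disjoint_pingPongSet ?_
    simpa only [hgen] using smul_pingPongSet_subset
  · rw [Monoid.CoprodI.range_eq_closure_zmod_two, funext hgen, fareyGroup]
    simp only [Matrix.range_cons, Matrix.range_empty, Set.union_empty, Set.singleton_union]
end
end
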